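/- Let C be a closed oligomorphic function clone on a countable set C with group of invertible unary elements G, and let (s_i) be a sequence of 6-ary operations in C such that for each i, s_i witnesses the pseudo-Siggers identity on a finite set A_i, where A_0 ⊆ A_1 ⊆ ⋯ with union C. Then there is a subsequence (γ_{i_k} s_{i_k}), with γ_{i_k} ∈ G, converging pointwise to some s ∈ C that witnesses the pseudo-Siggers identity locally on every A_i. -/
import Mathlib


/-- A function clone on ℕ (operations of positive arity `n+1`),
containing all projections and closed under composition. -/
structure CloneOn where
  ops : ∀ n : ℕ, Set ((Fin (n + 1) → ℕ) → ℕ)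
  proj_mem : ∀ (n : ℕ) (i : Fin (n + 1)), (fun x => x i) ∈ ops n
  comp_mem : ∀ (n m : ℕ) (f : (Fin (n + 1) → ℕ) → ℕ)
      (g : Fin (n + 1) → ((Fin (m + 1) → ℕ) → ℕ)),
      f ∈ ops n → (∀ i, g i ∈ ops m) →
      (fun x => f (fun i => g i x)) ∈ ops m

/-- `u : ℕ → ℕ` is a unary member of the clone. -/
def CloneOn.unaryMem (C : CloneOn) (u : ℕ → ℕ) : Prop :=
  (fun x : Fin 1 → ℕ => u (x 0)) ∈ C.ops 0

/-- The clone is topologically closed: any pointwise limit of members is a member. -/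
def CloneOn.IsClosed (C : CloneOn) : Prop :=
  ∀ (n : ℕ) (f : (Fin (n + 1) → ℕ) → ℕ),
    (∀ F : Finset (Fin (n + 1) → ℕ), ∃ g ∈ C.ops n, ∀ x ∈ F, g x = f x) → f ∈ C.ops n

/-- `u` is an invertible unary member of the clone. -/
def CloneOn.Invertible (C : CloneOn) (u : ℕ → ℕ) : Prop :=
  C.unaryMem u ∧ ∃ v : ℕ → ℕ, C.unaryMem v ∧ (∀ x, v (u x) = x) ∧ (∀ x, u (v x) = x)

/-- The clone is oligomorphic. -/
def CloneOn.Oligo (C : CloneOn) : Prop :=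
  ∀ k : ℕ, ∃ (N : ℕ) (reps : Fin N → (Fin k → ℕ)),
    ∀ x : Fin k → ℕ, ∃ (i : Fin N) (u : ℕ → ℕ),
      C.Invertible u ∧ (fun j => u (reps i j)) = x


namespace CloneOn
variable (C : CloneOn)

lemma unaryMem_id' : C.unaryMem (fun x => x) := C.proj_mem 0 0

lemma unaryMem_comp' {u v : ℕ → ℕ} (hu : C.unaryMem u) (hv : C.unaryMem v) :
    C.unaryMem (fun x => u (v x)) :=
  C.comp_mem 0 0 (fun x => u (x 0)) (fun _ => fun x => v (x 0)) hu (fun _ => hv)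

lemma invertible_id' : C.Invertible (fun x => x) :=
  ⟨C.unaryMem_id', fun x => x, C.unaryMem_id', fun _ => rfl, fun _ => rfl⟩

lemma invertible_comp' {u v : ℕ → ℕ} (hu : C.Invertible u) (hv : C.Invertible v) :
    C.Invertible (fun x => u (v x)) := by
  obtain ⟨hu1, u', hu2, hu3, hu4⟩ := hu
  obtain ⟨hv1, v', hv2, hv3, hv4⟩ := hv
  exact ⟨C.unaryMem_comp' hu1 hv1, fun x => v' (u' x), C.unaryMem_comp' hv2 hu2,
    fun x => by simp [hu3, hv3], fun x => by simp [hv4, hu4]⟩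

lemma invertible_inv' {u : ℕ → ℕ} (hu : C.Invertible u) :
    ∃ v, C.Invertible v ∧ (∀ x, v (u x) = x) ∧ (∀ x, u (v x) = x) := by
  obtain ⟨hu1, v, hv, h1, h2⟩ := hu
  exact ⟨v, ⟨hv, u, hu1, h2, h1⟩, h1, h2⟩

lemma comp_unary' {u : ℕ → ℕ} {f : (Fin 6 → ℕ) → ℕ} (hu : C.unaryMem u) (hf : f ∈ C.ops 5) :
    (fun x => u (f x)) ∈ C.ops 5 :=
  C.comp_mem 0 5 (fun x => u (x 0)) (fun _ => f) hu (fun _ => hf)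

end CloneOn

lemma exists_infinite_fiber_of_infinite {S : Set ℕ} (hS : S.Infinite) {N : ℕ}
    (c : ℕ → Fin N) : ∃ b, {i | i ∈ S ∧ c i = b}.Infinite := by
  haveI := hS.to_subtype
  obtain ⟨b, hb⟩ := Finite.exists_infinite_fiber (fun i : S => c i)
  refine ⟨b, ?_⟩
  haveI : Infinite ((fun i : S => c i) ⁻¹' {b}) := hb
  exact Set.infinite_of_injective_forall_mem
    (f := fun p : ((fun i : S => c i) ⁻¹' {b}) => (p.1 : ℕ))
    (fun p q h => Subtype.ext (Subtype.ext h))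
    (fun p => ⟨p.1.2, p.2⟩)

/-- The invariant for the diagonal construction: `Sw.1` is an infinite set of indices `i`
such that some invertible unary maps the values of `s i` on the first `n` enumerated
tuples to the fixed values `Sw.2`. -/
def GoodP (C : CloneOn) (s : ℕ → ((Fin 6 → ℕ) → ℕ)) (e : ℕ ≃ (Fin 6 → ℕ))
    (n : ℕ) (Sw : Set ℕ × (ℕ → ℕ)) : Prop :=
  Sw.1.Infinite ∧ ∀ i ∈ Sw.1, ∃ γ, C.Invertible γ ∧ ∀ j < n, γ (s i (e j)) = Sw.2 j

lemma step_ex (C : CloneOn) (holig : C.Oligo) (s : ℕ → ((Fin 6 → ℕ) → ℕ))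
    (e : ℕ ≃ (Fin 6 → ℕ)) (n : ℕ) (Sw : Set ℕ × (ℕ → ℕ)) (hG : GoodP C s e n Sw) :
    ∃ Sw' : Set ℕ × (ℕ → ℕ), (∀ j < n, Sw'.2 j = Sw.2 j) ∧ GoodP C s e (n + 1) Sw' := by
  classical
  obtain ⟨hSinf, hS⟩ := hG
  obtain ⟨N, reps, hreps⟩ := holig (n + 1)
  have hc : ∀ i : ℕ, ∃ b : Fin N, ∃ u, C.Invertible u ∧
      ∀ j : Fin (n + 1), u (reps b j) = s i (e (j : ℕ)) := by
    intro i
    obtain ⟨b, u, hu, hequ⟩ := hreps (fun j : Fin (n + 1) => s i (e (j : ℕ)))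
    exact ⟨b, u, hu, fun j => congrFun hequ j⟩
  choose c u hu hequ using hc
  obtain ⟨b, hbinf⟩ := exists_infinite_fiber_of_infinite hSinf c
  obtain ⟨i0, hi0⟩ := hbinf.nonempty
  obtain ⟨δ, hδinv, hδ⟩ := hS i0 hi0.1
  choose uinv huinvinv hui hiu using fun i => C.invertible_inv' (hu i)
  refine ⟨({i | i ∈ Sw.1 ∧ c i = b}, Function.update Sw.2 n (δ (s i0 (e n)))),
    fun j hj => Function.update_of_ne (by omega) _ _, hbinf, ?_⟩
  rintro i ⟨hiS, hib⟩
  refine ⟨fun x => δ (u i0 (uinv i x)),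
    C.invertible_comp' hδinv (C.invertible_comp' (hu i0) (huinvinv i)), ?_⟩
  intro j hj
  have h1 : s i (e j) = u i (reps b ⟨j, hj⟩) := by
    rw [← hib]; exact (hequ i ⟨j, hj⟩).symm
  have h2 : uinv i (s i (e j)) = reps b ⟨j, hj⟩ := by rw [h1, hui]
  have h3 : u i0 (reps b ⟨j, hj⟩) = s i0 (e j) := by rw [← hi0.2]; exact hequ i0 ⟨j, hj⟩
  show δ (u i0 (uinv i (s i (e j)))) = Function.update Sw.2 n (δ (s i0 (e n))) j
  rcases Nat.lt_or_ge j n with h | h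
  · rw [h2, h3, Function.update_of_ne (by omega), hδ j h]
  · have hjn : j = n := by omega
    subst hjn
    rw [h2, h3, Function.update_self]

open scoped Classical in
noncomputable def chainF (C : CloneOn) (holig : C.Oligo) (s : ℕ → ((Fin 6 → ℕ) → ℕ))
    (e : ℕ ≃ (Fin 6 → ℕ)) : ℕ → Set ℕ × (ℕ → ℕ)
  | 0 => (Set.univ, fun _ => 0)
  | n + 1 =>
    if h : GoodP C s e n (chainF C holig s e n)
    then (step_ex C holig s e n (chainF C holig s e n) h).choose
    else chainF C holig s e n

lemma chainF_good (C : CloneOn) (holig : C.Oligo) (s : ℕ → ((Fin 6 → ℕ) → ℕ))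
    (e : ℕ ≃ (Fin 6 → ℕ)) : ∀ n, GoodP C s e n (chainF C holig s e n) := by
  intro n
  induction n with
  | zero =>
      exact ⟨Set.infinite_univ, fun i _ =>
        ⟨fun x => x, C.invertible_id', fun j hj => absurd hj (Nat.not_lt_zero j)⟩⟩
  | succ n ih =>
      rw [chainF, dif_pos ih]
      exact (step_ex C holig s e n (chainF C holig s e n) ih).choose_spec.2

lemma chainF_coh (C : CloneOn) (holig : C.Oligo) (s : ℕ → ((Fin 6 → ℕ) → ℕ))
    (e : ℕ ≃ (Fin 6 → ℕ)) : ∀ n, ∀ j < n,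
      (chainF C holig s e (n + 1)).2 j = (chainF C holig s e n).2 j := by
  intro n j hj
  rw [chainF, dif_pos (chainF_good C holig s e n)]
  exact (step_ex C holig s e n (chainF C holig s e n) (chainF_good C holig s e n)).choose_spec.1 j hj

lemma chainF_stab (C : CloneOn) (holig : C.Oligo) (s : ℕ → ((Fin 6 → ℕ) → ℕ))
    (e : ℕ ≃ (Fin 6 → ℕ)) : ∀ n, ∀ j < n,
      (chainF C holig s e n).2 j = (chainF C holig s e (j + 1)).2 j := by
  intro n
  induction n with
  | zero => omega
  | succ n ih =>
      intro j hj
      rcases Nat.lt_or_ge j n with h | h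
      · rw [chainF_coh C holig s e n j h]; exact ih j h
      · have : j = n := by omega
        subst this; rfl

noncomputable def phiF (S : ℕ → Set ℕ) (hgt : ∀ n p, ∃ b, b ∈ S n ∧ p < b) : ℕ → ℕ
  | 0 => (hgt 0 0).choose
  | k + 1 => (hgt (k + 1) (max (phiF S hgt k) (k + 1))).choose

lemma phiF_mem (S : ℕ → Set ℕ) (hgt : ∀ n p, ∃ b, b ∈ S n ∧ p < b) :
    ∀ k, phiF S hgt k ∈ S k
  | 0 => (hgt 0 0).choose_spec.1
  | k + 1 => (hgt (k + 1) (max (phiF S hgt k) (k + 1))).choose_spec.1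

lemma phiF_lt (S : ℕ → Set ℕ) (hgt : ∀ n p, ∃ b, b ∈ S n ∧ p < b) (k : ℕ) :
    phiF S hgt k < phiF S hgt (k + 1) :=
  lt_of_le_of_lt (le_max_left _ _) (hgt (k + 1) (max (phiF S hgt k) (k + 1))).choose_spec.2

lemma phiF_ge (S : ℕ → Set ℕ) (hgt : ∀ n p, ∃ b, b ∈ S n ∧ p < b) :
    ∀ k, k ≤ phiF S hgt k
  | 0 => Nat.zero_le _
  | k + 1 => le_of_lt (lt_of_le_of_lt (le_max_right _ _)
      (hgt (k + 1) (max (phiF S hgt k) (k + 1))).choose_spec.2)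

/-- Given 6-ary operations `sᵢ` witnessing the pseudo-Siggers identity on an increasing
exhaustive sequence of finite sets, some subsequence, multiplied by invertible unaries,
converges pointwise to a member of the clone witnessing all the local identities. -/
theorem stmt_14 (C : CloneOn) (hcl : C.IsClosed) (holig : C.Oligo)
    (A : ℕ → Finset ℕ) (hA : ∀ i, A i ⊆ A (i + 1)) (hAall : ∀ x : ℕ, ∃ i, x ∈ A i)
    (s : ℕ → ((Fin 6 → ℕ) → ℕ)) (hs : ∀ i, s i ∈ C.ops 5)
    (hwit : ∀ i, ∃ α β : ℕ → ℕ, C.unaryMem α ∧ C.unaryMem β ∧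
      ∀ x ∈ A i, ∀ y ∈ A i, ∀ z ∈ A i,
        α (s i ![x, y, x, z, y, z]) = β (s i ![y, x, z, x, z, y])) :
    ∃ φ : ℕ → ℕ, StrictMono φ ∧
      ∃ γ : ℕ → (ℕ → ℕ), (∀ k, C.Invertible (γ k)) ∧
        ∃ t : (Fin 6 → ℕ) → ℕ, t ∈ C.ops 5 ∧
          -- the sequence γₖ ∘ s_{φ(k)} converges pointwise to t
          (∀ x : Fin 6 → ℕ, ∃ K, ∀ k, K ≤ k → γ k (s (φ k) x) = t x) ∧
          -- t witnesses the pseudo-Siggers identity locally on every A i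
          (∀ i, ∃ α β : ℕ → ℕ, C.unaryMem α ∧ C.unaryMem β ∧
            ∀ x ∈ A i, ∀ y ∈ A i, ∀ z ∈ A i,
              α (t ![x, y, x, z, y, z]) = β (t ![y, x, z, x, z, y])) := by
  classical
  obtain ⟨e⟩ : Nonempty (ℕ ≃ (Fin 6 → ℕ)) := by
    haveI : Encodable (Fin 6 → ℕ) := Encodable.ofCountable _
    haveI : Denumerable (Fin 6 → ℕ) := Denumerable.ofEncodableOfInfinite _
    exact ⟨(Denumerable.eqv _).symm⟩
  have hAmono : ∀ i m, i ≤ m → A i ⊆ A m := by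
    intro i m h
    induction m, h using Nat.le_induction with
    | base => exact subset_rfl
    | succ m hm ih => exact ih.trans (hA m)
  have hgood := chainF_good C holig s e
  set S : ℕ → Set ℕ := fun n => (chainF C holig s e n).1 with hSdef
  have hgt : ∀ n p, ∃ b, b ∈ S n ∧ p < b := by
    intro n p
    obtain ⟨b, hb1, hb2⟩ := (hgood n).1.exists_gt p
    exact ⟨b, hb1, hb2⟩
  have hφmono : StrictMono (phiF S hgt) := strictMono_nat_of_lt_succ (phiF_lt S hgt)
  set φ := phiF S hgt with hφdef
  set v : ℕ → ℕ := fun j => (chainF C holig s e (j + 1)).2 j with hvdef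
  set t : (Fin 6 → ℕ) → ℕ := fun x => v (e.symm x) with htdef
  have hγex : ∀ k, ∃ γ, C.Invertible γ ∧ ∀ j < k, γ (s (φ k) (e j)) = v j := by
    intro k
    obtain ⟨γ, hγ1, hγ2⟩ := (hgood k).2 (φ k) (phiF_mem S hgt k)
    exact ⟨γ, hγ1, fun j hj => by
      rw [hγ2 j hj, hvdef]; exact chainF_stab C holig s e k j hj⟩
  choose γ hγinv hγval using hγex
  have hconv : ∀ x : Fin 6 → ℕ, ∀ k, e.symm x < k → γ k (s (φ k) x) = t x := by
    intro x k hk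
    have h := hγval k (e.symm x) hk
    rwa [e.apply_symm_apply] at h
  have htmem : t ∈ C.ops 5 := by
    apply hcl 5
    intro Fs
    refine ⟨fun x => γ ((Fs.sup fun x => e.symm x) + 1)
        (s (φ ((Fs.sup fun x => e.symm x) + 1)) x),
      C.comp_unary' (hγinv _).1 (hs _), ?_⟩
    intro x hx
    exact hconv x _ (Nat.lt_succ_of_le (Finset.le_sup hx))
  refine ⟨φ, hφmono, γ, hγinv, t, htmem, fun x => ⟨e.symm x + 1, fun k hk => hconv x k hk⟩, ?_⟩
  intro i
  obtain ⟨K, hK⟩ : ∃ K, ∀ tup : Fin 6 → ℕ, (∀ j, tup j ∈ A i) → e.symm tup < K := by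
    refine ⟨(Fintype.piFinset (fun _ : Fin 6 => A i)).sup (fun tup => e.symm tup) + 1, ?_⟩
    intro tup htup
    have hmem : tup ∈ Fintype.piFinset (fun _ : Fin 6 => A i) := by
      rw [Fintype.mem_piFinset]; exact htup
    exact Nat.lt_succ_of_le (Finset.le_sup hmem)
  obtain ⟨α₀, β₀, hα₀, hβ₀, hw⟩ := hwit (φ (max i K))
  obtain ⟨δ, hδinv, hδ1, hδ2⟩ := C.invertible_inv' (hγinv (max i K))
  refine ⟨fun x => α₀ (δ x), fun x => β₀ (δ x),
    C.unaryMem_comp' hα₀ hδinv.1, C.unaryMem_comp' hβ₀ hδinv.1, ?_⟩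
  intro x hx y hy z hz
  have hik : i ≤ φ (max i K) := le_trans (le_max_left _ _) (phiF_ge S hgt (max i K))
  have h1 : e.symm ![x, y, x, z, y, z] < max i K :=
    lt_of_lt_of_le (hK _ (by intro j; fin_cases j <;> simpa)) (le_max_right _ _)
  have h2 : e.symm ![y, x, z, x, z, y] < max i K :=
    lt_of_lt_of_le (hK _ (by intro j; fin_cases j <;> simpa)) (le_max_right _ _)
  have e1 : t ![x, y, x, z, y, z] = γ (max i K) (s (φ (max i K)) ![x, y, x, z, y, z]) :=
    (hconv _ _ h1).symm
  have e2 : t ![y, x, z, x, z, y] = γ (max i K) (s (φ (max i K)) ![y, x, z, x, z, y]) :=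
    (hconv _ _ h2).symm
  show α₀ (δ (t ![x, y, x, z, y, z])) = β₀ (δ (t ![y, x, z, x, z, y]))
  rw [e1, e2, hδ1, hδ1]
  exact hw x (hAmono i _ hik hx) y (hAmono i _ hik hy) z (hAmono i _ hik hz)
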